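/- arXiv:2501.01514 — 3 statements merged into one kernel-verified Lean document; each statement's English description precedes it below -/
import Mathlib

section
/- Hecke eigenvalue of the Eisenstein series at p: for every prime p and every integer n ≥ 1, a(pn) = (ψ(p) + τ(p)p^{r+1}) · a(n) − ψ(p)τ(p) p^{r+1} · a(n/p), where a(n/p) is interpreted as 0 when p ∤ n. Thus E_{r+2}(ψ,τ) is a Hecke eigenform at p with eigenvalue ψ(p) + τ(p)p^{r+1}, and its p-th Hecke polynomial x² − (ψ(p)+τ(p)p^{r+1})x + ψ(p)τ(p)p^{r+1} factors as (x − ψ(p))(x − τ(p)p^{r+1}). -/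
/-- **Hecke eigenvalue of the Eisenstein series at `p`**: for every prime `p` and every
`n ≥ 1`, `a(pn) = (ψ(p) + τ(p)p^{r+1})·a(n) − ψ(p)τ(p)p^{r+1}·a(n/p)` (where `a(n/p)` is
interpreted as `0` when `p ∤ n`); thus `E_{r+2}(ψ,τ)` is a Hecke eigenform at `p` with
eigenvalue `ψ(p) + τ(p)p^{r+1}`, and its `p`-th Hecke polynomial
`x² − (ψ(p)+τ(p)p^{r+1})x + ψ(p)τ(p)p^{r+1}` factors as `(x − ψ(p))(x − τ(p)p^{r+1})`. -/
theorem eisenstein_hecke_eigenvalue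
    (N₁ N₂ : ℕ) (hN₁ : 1 ≤ N₁) (hN₂ : 1 ≤ N₂) (r : ℕ)
    (ψ : DirichletCharacter ℂ N₁) (τ : DirichletCharacter ℂ N₂)
    (a : ℕ → ℂ) (ha0 : a 0 = 0)
    (ha : ∀ n : ℕ, 1 ≤ n →
      a n = ∑ d ∈ n.divisors,
        ψ (d : ZMod N₁) * (τ ((n / d : ℕ) : ZMod N₂) * ((n / d : ℕ) : ℂ) ^ (r + 1)))
    (p : ℕ) (hp : p.Prime) :
    (∀ n : ℕ, 1 ≤ n →
      a (p * n) = (ψ (p : ZMod N₁) + τ (p : ZMod N₂) * (p : ℂ) ^ (r + 1)) * a n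
        - ψ (p : ZMod N₁) * τ (p : ZMod N₂) * (p : ℂ) ^ (r + 1)
          * (if p ∣ n then a (n / p) else 0)) ∧
    (∀ x : ℂ,
      x ^ 2 - (ψ (p : ZMod N₁) + τ (p : ZMod N₂) * (p : ℂ) ^ (r + 1)) * x
          + ψ (p : ZMod N₁) * τ (p : ZMod N₂) * (p : ℂ) ^ (r + 1)
        = (x - ψ (p : ZMod N₁)) * (x - τ (p : ZMod N₂) * (p : ℂ) ^ (r + 1))) := by
  refine ⟨?_, fun x => by ring⟩
  intro n hn
  have hn0 : n ≠ 0 := by omega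
  have hp0 : p ≠ 0 := hp.ne_zero
  have hpn0 : p * n ≠ 0 := Nat.mul_ne_zero hp0 hn0
  set F : ℕ → ℂ := fun d =>
    ψ (d : ZMod N₁) * (τ (((p * n) / d : ℕ) : ZMod N₂) * (((p * n) / d : ℕ) : ℂ) ^ (r + 1))
    with hF
  have hinjon : ∀ (s : Finset ℕ), ∀ a ∈ s, ∀ b ∈ s, p * a = p * b → a = b :=
    fun s a _ b _ h => Nat.eq_of_mul_eq_mul_left hp.pos h
  have hUnion : (p * n).divisors = n.divisors ∪ n.divisors.image (fun e => p * e) := by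
    ext d
    simp only [Finset.mem_union, Nat.mem_divisors, Finset.mem_image]
    constructor
    · rintro ⟨hd, -⟩
      by_cases h : d ∣ n
      · exact Or.inl ⟨h, hn0⟩
      · have hpd : p ∣ d := by
          by_contra hc
          have hcop : Nat.Coprime d p :=
            Nat.coprime_comm.mp (hp.coprime_iff_not_dvd.mpr hc)
          exact h (hcop.dvd_of_dvd_mul_left hd)
        refine Or.inr ⟨d / p, ⟨?_, hn0⟩, Nat.mul_div_cancel' hpd⟩
        rw [← Nat.mul_div_cancel' hpd] at hd
        exact (Nat.mul_dvd_mul_iff_left hp.pos).mp hd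
    · rintro (⟨h, -⟩ | ⟨e, ⟨he, -⟩, rfl⟩)
      · exact ⟨h.mul_left p, hpn0⟩
      · exact ⟨Nat.mul_dvd_mul_left p he, hpn0⟩
  have hmain : a (p * n) = (∑ d ∈ n.divisors, F d)
      + (∑ d ∈ n.divisors.image (fun e => p * e), F d)
      - (∑ d ∈ n.divisors ∩ n.divisors.image (fun e => p * e), F d) := by
    rw [ha (p * n) (Nat.one_le_iff_ne_zero.mpr hpn0)]
    have : (∑ d ∈ (p * n).divisors,
        ψ (d : ZMod N₁) * (τ (((p * n) / d : ℕ) : ZMod N₂) * (((p * n) / d : ℕ) : ℂ) ^ (r + 1)))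
        = ∑ d ∈ (p * n).divisors, F d := rfl
    rw [this, hUnion]
    exact eq_sub_of_add_eq Finset.sum_union_inter
  have hA : ∑ d ∈ n.divisors, F d
      = τ (p : ZMod N₂) * (p : ℂ) ^ (r + 1) * a n := by
    rw [ha n hn, Finset.mul_sum]
    refine Finset.sum_congr rfl fun d hd => ?_
    obtain ⟨hdn, -⟩ := Nat.mem_divisors.mp hd
    have h1 : p * n / d = p * (n / d) := Nat.mul_div_assoc p hdn
    simp only [hF, h1, Nat.cast_mul, map_mul]
    push_cast
    ring
  have hB : ∑ d ∈ n.divisors.image (fun e => p * e), F d = ψ (p : ZMod N₁) * a n := by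
    rw [Finset.sum_image (hinjon _), ha n hn, Finset.mul_sum]
    refine Finset.sum_congr rfl fun e he => ?_
    have h1 : p * n / (p * e) = n / e := Nat.mul_div_mul_left _ _ hp.pos
    simp only [hF, h1, Nat.cast_mul, map_mul]
    ring
  by_cases hpn : p ∣ n
  · have hnp0 : n / p ≠ 0 :=
      Nat.ne_of_gt (Nat.div_pos (Nat.le_of_dvd (Nat.pos_of_ne_zero hn0) hpn) hp.pos)
    have hI2 : n.divisors ∩ n.divisors.image (fun e => p * e)
        = (n / p).divisors.image (fun e => p * e) := by
      ext d
      simp only [Finset.mem_inter, Nat.mem_divisors, Finset.mem_image]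
      constructor
      · rintro ⟨⟨hdn, -⟩, e, ⟨hen, -⟩, rfl⟩
        exact ⟨e, ⟨(Nat.dvd_div_iff_mul_dvd hpn).mpr hdn, hnp0⟩, rfl⟩
      · rintro ⟨e, ⟨henp, -⟩, rfl⟩
        exact ⟨⟨(Nat.dvd_div_iff_mul_dvd hpn).mp henp, hn0⟩,
          e, ⟨henp.trans (Nat.div_dvd_of_dvd hpn), hn0⟩, rfl⟩
    have hI : ∑ d ∈ (n / p).divisors.image (fun e => p * e), F d
        = ψ (p : ZMod N₁) * τ (p : ZMod N₂) * (p : ℂ) ^ (r + 1) * a (n / p) := by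
      rw [Finset.sum_image (hinjon _), ha (n / p) (Nat.one_le_iff_ne_zero.mpr hnp0),
        Finset.mul_sum]
      refine Finset.sum_congr rfl fun e he => ?_
      obtain ⟨hednp, -⟩ := Nat.mem_divisors.mp he
      have h1 : p * n / (p * e) = n / e := Nat.mul_div_mul_left _ _ hp.pos
      have h2 : n / e = p * (n / p / e) := by
        conv_lhs => rw [← Nat.mul_div_cancel' hpn]
        exact Nat.mul_div_assoc p hednp
      simp only [hF, h1, h2, Nat.cast_mul, map_mul]
      push_cast
      ring
    rw [if_pos hpn, hmain, hA, hB, hI2, hI]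
    ring
  · have hI2 : n.divisors ∩ n.divisors.image (fun e => p * e) = ∅ := by
      ext d
      simp only [Finset.mem_inter, Nat.mem_divisors, Finset.mem_image,
        Finset.notMem_empty, iff_false, not_and]
      rintro ⟨hdn, -⟩ ⟨e, ⟨he, -⟩, rfl⟩
      exact hpn ((dvd_mul_right p e).trans hdn)
    rw [if_neg hpn, hmain, hA, hB, hI2, Finset.sum_empty]
    ring
end

section
/- Every continuous K-valued character σ of ℤ_p^× is analytic: for every z ∈ U, the function σ (viewed as a function on the open subset U of ℚ_p with values in K) is analytic at z. -/
/-!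
The exponential series converges on `‖x‖ < p⁻¹` in any normed `ℚ_p`-algebra, since
`v_p(n!) ≤ n`. For small `s₀ ≠ 0` pick a small `c ∈ K` with `exp c = σ (exp s₀)`, using that
`exp` is a local homeomorphism at `0`. The maps `a ↦ σ (exp (a s₀))` and `a ↦ exp (a c)` are
continuous on `ℤ_p` and both send `n ∈ ℕ` to `(exp c) ^ n`, so they agree on all of `ℤ_p`. Hence
`σ (exp s) = exp (s s₀⁻¹ c)` near `0`, so `σ ∘ exp` is analytic at `0`, and since `exp` has an
analytic local inverse, `σ` is analytic at `1`. Multiplicativity moves this to every `z` with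
`‖z‖ = 1`.
-/

open NormedSpace Filter Topology Nat
open scoped NNReal ENNReal

theorem isOpen_setOf_norm_eq_one {E : Type*} [SeminormedAddGroup E] [IsUltrametricDist E] :
    IsOpen {z : E | ‖z‖ = 1} := by
  have hsphere : {z : E | ‖z‖ = 1} = Metric.sphere 0 1 :=
    Set.ext fun _ => mem_sphere_zero_iff_norm.symm
  exact hsphere ▸ IsUltrametricDist.isOpen_sphere (0 : E) one_ne_zero

theorem map_pow_of_map_mul_of_norm_eq_one {𝕜 M : Type*} [NormedDivisionRing 𝕜] [Monoid M]
    {σ : 𝕜 → M} (hone : σ 1 = 1)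
    (hmul : ∀ x ∈ {z : 𝕜 | ‖z‖ = 1}, ∀ y ∈ {z : 𝕜 | ‖z‖ = 1}, σ (x * y) = σ x * σ y)
    {x : 𝕜} (hx : ‖x‖ = 1) (n : ℕ) : σ (x ^ n) = σ x ^ n := by
  induction n with
  | zero => rw [pow_zero, pow_zero, hone]
  | succ n ih =>
    rw [pow_succ, hmul _ (by simp [norm_pow, hx]) x hx, ih, pow_succ]

theorem analyticAt_of_analyticAt_one_of_map_mul {𝕜 E : Type*} [NontriviallyNormedField 𝕜]
    [IsUltrametricDist 𝕜] [NormedRing E] [NormedAlgebra 𝕜 E] {σ : 𝕜 → E}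
    (hmul : ∀ x ∈ {z : 𝕜 | ‖z‖ = 1}, ∀ y ∈ {z : 𝕜 | ‖z‖ = 1}, σ (x * y) = σ x * σ y)
    (h1 : AnalyticAt 𝕜 σ 1) {z : 𝕜} (hz : ‖z‖ = 1) : AnalyticAt 𝕜 σ z := by
  have hz0 : z ≠ 0 := norm_ne_zero_iff.1 (by rw [hz]; exact one_ne_zero)
  have hσ : AnalyticAt 𝕜 σ (z⁻¹ * z) := by rwa [inv_mul_cancel₀ hz0]
  have htranslate : AnalyticAt 𝕜 (fun w => σ z * σ (z⁻¹ * w)) z :=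
    analyticAt_const.mul (hσ.comp (analyticAt_const.mul analyticAt_id))
  refine htranslate.congr ?_
  filter_upwards [isOpen_setOf_norm_eq_one.mem_nhds hz] with w hw
  rw [← hmul z hz _ (by simp [hw, hz]), mul_inv_cancel_left₀ hz0]

namespace Padic

variable {p : ℕ} [hp : Fact p.Prime]

theorem inv_pow_le_norm_factorial (n : ℕ) : (p : ℝ)⁻¹ ^ n ≤ ‖(n ! : ℚ_[p])‖ := by
  have hval : padicValNat p n ! ≤ n := by
    have hlegendre := sub_one_mul_padicValNat_factorial (p := p) n
    have hle : padicValNat p n ! ≤ (p - 1) * padicValNat p n ! :=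
      Nat.le_mul_of_pos_left _ (by have := hp.out.two_le; omega)
    omega
  rw [norm_eq_zpow_neg_valuation (by exact_mod_cast n.factorial_ne_zero), valuation_natCast,
    inv_pow, ← zpow_natCast, ← zpow_neg]
  exact zpow_le_zpow_right₀ (by exact_mod_cast hp.out.one_le) (by omega)

section Exp

variable (A : Type*) [NormedRing A] [NormedAlgebra ℚ_[p] A] [NormOneClass A]

theorem inv_le_radius_expSeries : (((p : ℝ≥0)⁻¹ : ℝ≥0) : ℝ≥0∞) ≤ (expSeries ℚ_[p] A).radius := by
  refine FormalMultilinearSeries.le_radius_of_bound _ 1 fun n => ?_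
  have hfact : ‖(n ! : ℚ_[p])‖ ≠ 0 := by simpa using n.factorial_ne_zero
  have hnorm : ‖expSeries ℚ_[p] A n‖ ≤ ‖(n ! : ℚ_[p])‖⁻¹ := by
    simpa only [expSeries, norm_inv, ContinuousMultilinearMap.norm_mkPiAlgebraFin, mul_one] using
      norm_smul_le ((n ! : ℚ_[p]))⁻¹ (ContinuousMultilinearMap.mkPiAlgebraFin ℚ_[p] n A)
  calc ‖expSeries ℚ_[p] A n‖ * (((p : ℝ≥0)⁻¹ : ℝ≥0) : ℝ) ^ n
      ≤ ‖(n ! : ℚ_[p])‖⁻¹ * ‖(n ! : ℚ_[p])‖ := by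
        refine mul_le_mul hnorm ?_ (by positivity) (by positivity)
        push_cast
        exact inv_pow_le_norm_factorial n
    _ = 1 := inv_mul_cancel₀ hfact

theorem radius_expSeries_pos : 0 < (expSeries ℚ_[p] A).radius :=
  lt_of_lt_of_le (ENNReal.coe_pos.2 (inv_pos.2 (by exact_mod_cast hp.out.pos)))
    (inv_le_radius_expSeries A)

variable {A} in
theorem mem_eball_radius_expSeries {x : A} (hx : ‖x‖ < (p : ℝ)⁻¹) :
    x ∈ Metric.eball 0 (expSeries ℚ_[p] A).radius := by
  refine lt_of_lt_of_le ?_ (inv_le_radius_expSeries A)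
  rw [edist_zero_right, enorm_eq_nnnorm, ENNReal.coe_lt_coe, ← NNReal.coe_lt_coe]
  simpa using hx

theorem eventually_exists_exp_eq [CompleteSpace A] :
    ∀ᶠ y in 𝓝 (1 : A), ∃ c, ‖c‖ < (p : ℝ)⁻¹ ∧ exp c = y := by
  have hderiv : HasStrictFDerivAt exp
      ((ContinuousLinearEquiv.refl ℚ_[p] A : A →L[ℚ_[p]] A)) (0 : A) := by
    simpa [ContinuousLinearEquiv.coe_refl, ← ContinuousLinearMap.one_def] using
      hasStrictFDerivAt_exp_zero_of_radius_pos (radius_expSeries_pos A)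
  rw [← exp_zero, ← hderiv.map_nhds_eq_of_equiv, eventually_map]
  filter_upwards [Metric.ball_mem_nhds (0 : A) (inv_pos.2 (Nat.cast_pos.2 hp.out.pos))] with c hc
  exact ⟨c, by simpa using hc, rfl⟩

variable {A} in
theorem analyticAt_exp_smul [CompleteSpace A] (b : A) :
    AnalyticAt ℚ_[p] (fun s : ℚ_[p] => exp (s • b)) 0 := by
  have hexp : AnalyticAt ℚ_[p] (exp : A → A) ((0 : ℚ_[p]) • b) := by
    rw [zero_smul]
    exact analyticAt_exp_of_mem_ball 0 (Metric.mem_eball_self (radius_expSeries_pos A))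
  exact hexp.comp (g := exp) (f := fun s : ℚ_[p] => s • b)
    ((ContinuousLinearMap.toSpanSingleton ℚ_[p] b).analyticAt 0)

end Exp

theorem exp_nsmul_of_norm_lt {A : Type*} [NormedCommRing A] [NormedAlgebra ℚ_[p] A]
    [NormOneClass A] [CompleteSpace A] {x : A} (hx : ‖x‖ < (p : ℝ)⁻¹) (n : ℕ) :
    exp (n • x) = exp x ^ n := by
  induction n with
  | zero => rw [zero_smul, pow_zero, exp_zero]
  | succ n ih =>
    have hnx : ‖n • x‖ < (p : ℝ)⁻¹ := by
      rw [← Nat.cast_smul_eq_nsmul ℚ_[p]]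
      have hn : ‖(n : ℚ_[p])‖ ≤ 1 := by exact_mod_cast norm_int_le_one (n : ℤ)
      exact (norm_smul_le _ _).trans_lt ((mul_le_of_le_one_left (norm_nonneg x) hn).trans_lt hx)
    rw [succ_nsmul, exp_add_of_mem_ball (mem_eball_radius_expSeries hnx)
      (mem_eball_radius_expSeries hx), ih, pow_succ]

theorem analyticAt_one_of_analyticAt_comp_exp {E : Type*} [NormedAddCommGroup E]
    [NormedSpace ℚ_[p] E] {f : ℚ_[p] → E} (hf : AnalyticAt ℚ_[p] (f ∘ exp) 0) :
    AnalyticAt ℚ_[p] f 1 := by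
  have hrad := radius_expSeries_pos (p := p) ℚ_[p]
  have hexp : AnalyticAt ℚ_[p] (exp : ℚ_[p] → ℚ_[p]) 0 :=
    analyticAt_exp_of_mem_ball 0 (Metric.mem_eball_self hrad)
  have hderiv : deriv (exp : ℚ_[p] → ℚ_[p]) 0 ≠ 0 := by
    rw [(hasDerivAt_exp_zero_of_radius_pos hrad).deriv]
    exact one_ne_zero
  simpa only [exp_zero] using (analyticAt_comp_iff_of_deriv_ne_zero hexp hderiv).1 hf

variable {K : Type*} [NormedCommRing K] [NormedAlgebra ℚ_[p] K] [NormOneClass K]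
  [CompleteSpace K] {σ : ℚ_[p] → K}

theorem comp_exp_mul_eq_exp_smul (hcont : ContinuousOn σ {z : ℚ_[p] | ‖z‖ = 1})
    (hone : σ 1 = 1)
    (hmul : ∀ x ∈ {z : ℚ_[p] | ‖z‖ = 1}, ∀ y ∈ {z : ℚ_[p] | ‖z‖ = 1}, σ (x * y) = σ x * σ y)
    {s₀ : ℚ_[p]} (hs₀ : ∀ s : ℚ_[p], ‖s‖ ≤ ‖s₀‖ → ‖s‖ < (p : ℝ)⁻¹ ∧ ‖exp s‖ = 1)
    {c : K} (hc : ‖c‖ < (p : ℝ)⁻¹) (hexp : exp c = σ (exp s₀)) (a : ℤ_[p]) :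
    σ (exp (a * s₀)) = exp ((a : ℚ_[p]) • c) := by
  have hσexp : ContinuousOn (fun s => σ (exp s)) {s : ℚ_[p] | ‖s‖ ≤ ‖s₀‖} :=
    hcont.comp (continuousOn_exp.mono fun s hs => mem_eball_radius_expSeries (hs₀ s hs).1)
      fun s hs => (hs₀ s hs).2
  have hlhs : Continuous fun a : ℤ_[p] => σ (exp (a * s₀)) :=
    hσexp.comp_continuous (by fun_prop) fun a => by
      simpa [norm_mul] using mul_le_of_le_one_left (norm_nonneg s₀) a.norm_le_one
  have hrhs : Continuous fun a : ℤ_[p] => exp ((a : ℚ_[p]) • c) :=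
    continuousOn_exp.comp_continuous (by fun_prop) fun a => mem_eball_radius_expSeries <|
      (norm_smul_le _ _).trans_lt <| by
        simpa using (mul_le_of_le_one_left (norm_nonneg c) a.norm_le_one).trans_lt hc
  refine congrFun (PadicInt.denseRange_natCast.equalizer hlhs hrhs (funext fun n => ?_)) a
  simp only [Function.comp_apply, PadicInt.coe_natCast, ← nsmul_eq_mul, Nat.cast_smul_eq_nsmul]
  rw [exp_nsmul_of_norm_lt (hs₀ s₀ le_rfl).1,
    map_pow_of_map_mul_of_norm_eq_one hone hmul (hs₀ s₀ le_rfl).2, ← hexp,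
    exp_nsmul_of_norm_lt hc]

theorem exists_comp_exp_eq_exp_smul (hcont : ContinuousOn σ {z : ℚ_[p] | ‖z‖ = 1})
    (hone : σ 1 = 1)
    (hmul : ∀ x ∈ {z : ℚ_[p] | ‖z‖ = 1}, ∀ y ∈ {z : ℚ_[p] | ‖z‖ = 1}, σ (x * y) = σ x * σ y) :
    ∃ b : K, ∀ᶠ s in 𝓝 (0 : ℚ_[p]), σ (exp s) = exp (s • b) := by
  have hexp : Tendsto (exp : ℚ_[p] → ℚ_[p]) (𝓝 0) (𝓝 1) := by
    simpa only [exp_zero] using (analyticAt_exp_of_mem_ball (0 : ℚ_[p])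
      (Metric.mem_eball_self (radius_expSeries_pos (p := p) ℚ_[p]))).continuousAt.tendsto
  have hU : {z : ℚ_[p] | ‖z‖ = 1} ∈ 𝓝 1 := isOpen_setOf_norm_eq_one.mem_nhds norm_one
  have hσexp : Tendsto (fun s => σ (exp s)) (𝓝 0) (𝓝 1) := by
    simpa only [Function.comp_def, hone] using (hcont.continuousAt hU).tendsto.comp hexp
  have hsmall : ∀ᶠ s in 𝓝 (0 : ℚ_[p]), (‖s‖ < (p : ℝ)⁻¹ ∧ ‖exp s‖ = 1) ∧
      ∃ c : K, ‖c‖ < (p : ℝ)⁻¹ ∧ exp c = σ (exp s) :=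
    ((tendsto_norm_zero.eventually_lt_const (inv_pos.2 (Nat.cast_pos.2 hp.out.pos))).and
      (hexp.eventually hU)).and (hσexp.eventually (eventually_exists_exp_eq K))
  obtain ⟨δ, hδ, hball⟩ := Metric.eventually_nhds_iff_ball.1 hsmall
  obtain ⟨s₀, hs₀0, hs₀δ⟩ := NormedField.exists_norm_lt ℚ_[p] hδ
  have hs₀ (s : ℚ_[p]) (hs : ‖s‖ ≤ ‖s₀‖) : (‖s‖ < (p : ℝ)⁻¹ ∧ ‖exp s‖ = 1) ∧
      ∃ c : K, ‖c‖ < (p : ℝ)⁻¹ ∧ exp c = σ (exp s) :=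
    hball s (mem_ball_zero_iff.2 (hs.trans_lt hs₀δ))
  obtain ⟨c, hc, hcexp⟩ := (hs₀ s₀ le_rfl).2
  refine ⟨s₀⁻¹ • c, ?_⟩
  filter_upwards [Metric.ball_mem_nhds 0 hs₀0] with s hs
  have hs' : ‖s * s₀⁻¹‖ ≤ 1 := by
    rw [norm_mul, norm_inv, ← div_eq_mul_inv]
    exact div_le_one_of_le₀ (mem_ball_zero_iff.1 hs).le hs₀0.le
  simpa [smul_smul, inv_mul_cancel_right₀ (norm_pos_iff.1 hs₀0)] using
    comp_exp_mul_eq_exp_smul hcont hone hmul (fun s hs => (hs₀ s hs).1) hc hcexp ⟨_, hs'⟩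

end Padic

theorem continuous_character_analytic_general
    (p : ℕ) [Fact p.Prime] (K : Type*) [NontriviallyNormedField K]
    [NormedAlgebra ℚ_[p] K] [CompleteSpace K]
    (σ : ℚ_[p] → K)
    (hcont : ContinuousOn σ {z : ℚ_[p] | ‖z‖ = 1})
    (hone : σ 1 = 1)
    (hmul : ∀ x ∈ {z : ℚ_[p] | ‖z‖ = 1}, ∀ y ∈ {z : ℚ_[p] | ‖z‖ = 1},
      σ (x * y) = σ x * σ y) :
    ∀ z ∈ {z : ℚ_[p] | ‖z‖ = 1}, AnalyticAt ℚ_[p] σ z := by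
  intro z hz
  refine analyticAt_of_analyticAt_one_of_map_mul hmul ?_ hz
  obtain ⟨b, hb⟩ := Padic.exists_comp_exp_eq_exp_smul hcont hone hmul
  exact Padic.analyticAt_one_of_analyticAt_comp_exp
    ((Padic.analyticAt_exp_smul b).congr (hb.mono fun _ h => h.symm))

/-- **Every continuous `K`-valued character of `ℤ_p^×` is analytic**: identifying `ℤ_p^×`
with the open set `U = {z ∈ ℚ_p : ‖z‖ = 1}`, if `σ : U → K` is continuous, `σ 1 = 1`, and
`σ (xy) = σ x · σ y` for all `x, y ∈ U`, then `σ` is analytic at every `z ∈ U`. -/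
theorem continuous_character_analytic
    (p : ℕ) [Fact p.Prime] (K : Type*) [NontriviallyNormedField K]
    [NormedAlgebra ℚ_[p] K] [CompleteSpace K] [IsUltrametricDist K]
    (σ : ℚ_[p] → K)
    (hcont : ContinuousOn σ {z : ℚ_[p] | ‖z‖ = 1})
    (hone : σ 1 = 1)
    (hmul : ∀ x ∈ {z : ℚ_[p] | ‖z‖ = 1}, ∀ y ∈ {z : ℚ_[p] | ‖z‖ = 1},
      σ (x * y) = σ x * σ y) :
    ∀ z ∈ {z : ℚ_[p] | ‖z‖ = 1}, AnalyticAt ℚ_[p] σ z :=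
  continuous_character_analytic_general p K σ hcont hone hmul
end

section
/- Well-definedness of the logarithmic distribution log^{[k]}: for every continuous K-valued character σ of ℤ_p^× there exists w = w(σ) ∈ K such that for every integer k ≥ 0 and every z ∈ U, z^k · σ^{(k)}(z) = w(w−1)⋯(w−k+1) · σ(z), where σ^{(k)} denotes the k-th derivative of σ within U. In particular, for each k the function z ↦ (d^kσ/dz^k)(z) · z^k / σ(z) is constant on ℤ_p^×, and its constant value is log^{[k]}(σ) = ∏_{i=0}^{k−1}(w(σ) − i). -/
/-!
Differentiating `σ (x * z) = σ x * σ z` in `x` at `x = 1` gives the differential equation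
`z • σ' z = w * σ z` with `w = σ' 1`, and iterating it yields
`z ^ k • σ⁽ᵏ⁾ z = w (w - 1) ⋯ (w - k + 1) * σ z`. Translating by elements of `U` shows that `σ` is
differentiable on all of `U` as soon as it is differentiable at one point; otherwise every
derivative of `σ` on `U` is Mathlib's junk value `0`, and `w = 0` works.
-/

open Set Filter Topology

section

variable {𝕜 : Type*} [NontriviallyNormedField 𝕜] {U : Set 𝕜}

theorem iteratedDeriv_succ_eqOn_zero_of_not_differentiableAt {F : Type*} [NormedAddCommGroup F]
    [NormedSpace 𝕜 F] {f : 𝕜 → F} (hU : IsOpen U) (hf : ∀ z ∈ U, ¬DifferentiableAt 𝕜 f z)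
    (k : ℕ) : EqOn (iteratedDeriv (k + 1) f) 0 U := by
  have hderiv : EqOn (deriv f) 0 U := fun z hz => deriv_zero_of_not_differentiableAt (hf z hz)
  intro z hz
  rw [iteratedDeriv_succ', hderiv.iteratedDeriv_of_isOpen hU k hz, iteratedDeriv_const_zero]
  rfl

section

variable {A : Type*} [NormedRing A] [NormedAlgebra 𝕜 A] {σ : 𝕜 → A}

theorem differentiableAt_mul_left_of_map_mul (hσ : ∀ x ∈ U, ∀ y ∈ U, σ (x * y) = σ x * σ y)
    {a x : 𝕜} (ha : a ∈ U) (ha0 : a ≠ 0) (hU : U ∈ 𝓝 x) (hx : DifferentiableAt 𝕜 σ x) :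
    DifferentiableAt 𝕜 σ (a * x) := by
  have hshift : Tendsto (a⁻¹ * ·) (𝓝 (a * x)) (𝓝 x) := by
    simpa [inv_mul_cancel_left₀ ha0] using (continuous_const_mul a⁻¹).tendsto (a * x)
  have htrans : σ =ᶠ[𝓝 (a * x)] fun y => σ a * σ (a⁻¹ * y) := by
    filter_upwards [hshift hU] with y hy
    rw [← hσ a ha _ hy, mul_inv_cancel_left₀ ha0]
  have hx' : DifferentiableAt 𝕜 σ (a⁻¹ * (a * x)) := by rwa [inv_mul_cancel_left₀ ha0]
  exact ((hx'.comp _ (differentiableAt_id.const_mul a⁻¹)).const_mul (σ a)).congr_of_eventuallyEq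
    htrans

theorem smul_deriv_eq_deriv_one_mul_of_map_mul (hσ : ∀ x ∈ U, ∀ y ∈ U, σ (x * y) = σ x * σ y)
    (h1 : U ∈ 𝓝 1) {z : 𝕜} (hz : z ∈ U) (hdz : DifferentiableAt 𝕜 σ z)
    (hd1 : DifferentiableAt 𝕜 σ 1) : z • deriv σ z = deriv σ 1 * σ z := by
  have hcomp : HasDerivAt (fun x => σ (x * z)) (z • deriv σ z) 1 := by
    have := hdz.hasDerivAt.scomp_of_eq 1 ((hasDerivAt_id 1).mul_const z) (one_mul z).symm
    rwa [one_mul] at this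
  have hprod : HasDerivAt (fun x => σ x * σ z) (deriv σ 1 * σ z) 1 :=
    hd1.hasDerivAt.mul_const _
  have heq : (fun x => σ (x * z)) =ᶠ[𝓝 1] fun x => σ x * σ z := by
    filter_upwards [h1] with x hx using hσ x hx z hz
  exact hcomp.unique (hprod.congr_of_eventuallyEq heq)

end

theorem iteratedDeriv_eqOn_of_smul_deriv_eq {A : Type*} [NormedCommRing A] [NormedAlgebra 𝕜 A]
    {σ : 𝕜 → A} {w : A}
    (hU : IsOpen U) (h0 : (0 : 𝕜) ∉ U) (hdiff : ∀ z ∈ U, DifferentiableAt 𝕜 σ z)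
    (hode : ∀ z ∈ U, z • deriv σ z = w * σ z) (k : ℕ) :
    EqOn (iteratedDeriv k σ)
      (fun z => z ^ (-(k : ℤ)) • ((∏ i ∈ Finset.range k, (w - i)) * σ z)) U := by
  induction k with
  | zero => intro z _; simp
  | succ k ih =>
    intro z hz
    have hz0 : z ≠ 0 := fun h => h0 (h ▸ hz)
    set c := ∏ i ∈ Finset.range k, (w - i)
    have hderiv : HasDerivAt (fun y => y ^ (-(k : ℤ)) • (c * σ y))
        (z ^ (-(k : ℤ)) • (c * deriv σ z) + (((-k : ℤ) : 𝕜) * z ^ (-(k : ℤ) - 1)) • (c * σ z)) z :=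
      (hasDerivAt_zpow _ z (Or.inl hz0)).smul ((hdiff z hz).hasDerivAt.const_mul c)
    have hσ' : deriv σ z = z⁻¹ • (w * σ z) := by rw [← hode z hz, inv_smul_smul₀ hz0]
    rw [iteratedDeriv_succ, (ih.eventuallyEq_of_mem (hU.mem_nhds hz)).deriv_eq, hderiv.deriv, hσ',
      mul_smul_comm, smul_smul, ← zpow_sub_one₀ hz0, mul_smul, smul_comm _ (z ^ _), ← smul_add,
      Finset.prod_range_succ]
    push_cast
    congr 1
    · rw [neg_add']
    · rw [neg_smul, Nat.cast_smul_eq_nsmul, nsmul_eq_mul]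
      ring

end

theorem log_distribution_well_defined_general
    (p : ℕ) [Fact p.Prime] (K : Type*) [NontriviallyNormedField K]
    [NormedAlgebra ℚ_[p] K]
    (σ : ℚ_[p] → K)
    (hmul : ∀ x ∈ {z : ℚ_[p] | ‖z‖ = 1}, ∀ y ∈ {z : ℚ_[p] | ‖z‖ = 1},
      σ (x * y) = σ x * σ y) :
    ∃ w : K, ∀ k : ℕ, ∀ z ∈ {z : ℚ_[p] | ‖z‖ = 1},
      (z ^ k) • iteratedDerivWithin k σ {z : ℚ_[p] | ‖z‖ = 1} z
        = (∏ i ∈ Finset.range k, (w - (i : K))) * σ z := by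
  set U : Set ℚ_[p] := {z | ‖z‖ = 1}
  have hU : IsOpen U := by
    simpa [U, Metric.sphere] using IsUltrametricDist.isOpen_sphere (0 : ℚ_[p]) one_ne_zero
  have h0 : (0 : ℚ_[p]) ∉ U := by simp [U]
  have hne : ∀ z ∈ U, z ≠ 0 := fun z hz h => h0 (h ▸ hz)
  have h1 : (1 : ℚ_[p]) ∈ U := by simp [U]
  suffices ∃ w : K, ∀ k : ℕ, ∀ z ∈ U,
      z ^ k • iteratedDeriv k σ z = (∏ i ∈ Finset.range k, (w - (i : K))) * σ z by
    obtain ⟨w, hw⟩ := this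
    exact ⟨w, fun k z hz => by rw [iteratedDerivWithin_of_isOpen hU hz]; exact hw k z hz⟩
  by_cases hd : ∃ z₀ ∈ U, DifferentiableAt ℚ_[p] σ z₀
  · obtain ⟨z₀, hz₀, hdz₀⟩ := hd
    have hdiff : ∀ z ∈ U, DifferentiableAt ℚ_[p] σ z := fun z hz => by
      simpa [hne z₀ hz₀] using differentiableAt_mul_left_of_map_mul hmul (a := z * z₀⁻¹)
        (by simp_all [U]) (by simp [hne z hz, hne z₀ hz₀]) (hU.mem_nhds hz₀) hdz₀
    have hode := fun z hz => smul_deriv_eq_deriv_one_mul_of_map_mul hmul (hU.mem_nhds h1) hz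
      (hdiff z hz) (hdiff 1 h1)
    refine ⟨deriv σ 1, fun k z hz => ?_⟩
    rw [iteratedDeriv_eqOn_of_smul_deriv_eq hU h0 hdiff hode k hz, smul_smul, ← zpow_natCast,
      ← zpow_add₀ (hne z hz), add_neg_cancel, zpow_zero, one_smul]
  · push Not at hd
    refine ⟨0, fun k z hz => ?_⟩
    cases k with
    | zero => simp
    | succ k =>
      rw [iteratedDeriv_succ_eqOn_zero_of_not_differentiableAt hU hd k hz]
      simp [Finset.prod_range_succ']

/-- **Well-definedness of the logarithmic distribution `log^{[k]}`**: for every continuous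
`K`-valued character `σ` of `ℤ_p^×` (identified with `U = {z ∈ ℚ_p : ‖z‖ = 1}`), there is
`w = w(σ) ∈ K` such that for every `k ≥ 0` and every `z ∈ U`,
`z^k · σ^{(k)}(z) = w(w−1)⋯(w−k+1) · σ(z)`, where `σ^{(k)}` is the `k`-th derivative of
`σ` within `U`.  In particular `z ↦ σ^{(k)}(z)·z^k/σ(z)` is constant on `ℤ_p^×`, with
constant value `log^{[k]}(σ) = ∏_{i=0}^{k−1} (w(σ) − i)`. -/
theorem log_distribution_well_defined
    (p : ℕ) [Fact p.Prime] (K : Type*) [NontriviallyNormedField K]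
    [NormedAlgebra ℚ_[p] K] [CompleteSpace K] [IsUltrametricDist K]
    (σ : ℚ_[p] → K)
    (hcont : ContinuousOn σ {z : ℚ_[p] | ‖z‖ = 1})
    (hone : σ 1 = 1)
    (hmul : ∀ x ∈ {z : ℚ_[p] | ‖z‖ = 1}, ∀ y ∈ {z : ℚ_[p] | ‖z‖ = 1},
      σ (x * y) = σ x * σ y) :
    ∃ w : K, ∀ k : ℕ, ∀ z ∈ {z : ℚ_[p] | ‖z‖ = 1},
      (z ^ k) • iteratedDerivWithin k σ {z : ℚ_[p] | ‖z‖ = 1} z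
        = (∏ i ∈ Finset.range k, (w - (i : K))) * σ z :=
  log_distribution_well_defined_general p K σ hmul
end
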